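/- arXiv:2512.06238 — 4 statements merged into one kernel-verified Lean document; each statement's English description precedes it below -/
import Mathlib

section
/- Let A and B be n×n positive definite real matrices. Then |log det(A) - log det(B)| ≤ n · max(‖A⁻¹‖₂, ‖B⁻¹‖₂) · ‖A - B‖₂. -/
open Matrix

/-- Spectral (ℓ²-operator) norm of a real matrix. -/
noncomputable def specNorm {m n : Type*} [Fintype m] [Fintype n] [DecidableEq n]
    (A : Matrix m n ℝ) : ℝ :=
  ‖LinearMap.toContinuousLinearMap (Matrix.toEuclideanLin A)‖

/-!
Conjugating by `S = B^{-1/2}` turns `A` into the positive definite matrix `C = S A S` with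
`log det C = log det A - log det B` and `tr C - n = tr (S (A - B) S)`. The eigenvalue form of
`log x ≤ x - 1` gives `log det C ≤ tr C - n`, and the trace of any matrix is at most `n` times its
spectral norm, since each diagonal entry `⟪eᵢ, M eᵢ⟫` is. Hence
`log det A - log det B ≤ n ‖B⁻¹‖ ‖A - B‖`; swapping `A` and `B` gives the other side.
-/

open scoped Matrix.Norms.L2Operator MatrixOrder RealInnerProductSpace

lemma specNorm_eq_l2_opNorm {m n : Type*} [Fintype m] [Fintype n] [DecidableEq n]
    (A : Matrix m n ℝ) : specNorm A = ‖A‖ :=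
  rfl

namespace Matrix

variable {n : Type*} [Fintype n] [DecidableEq n]

lemma abs_apply_self_le_l2_opNorm (M : Matrix n n ℝ) (i : n) : |M i i| ≤ ‖M‖ := by
  set e := EuclideanSpace.single i (1 : ℝ)
  have he : ‖e‖ = 1 := by simp [e]
  have hMii : M i i = ⟪e, toEuclideanCLM (𝕜 := ℝ) M e⟫ := by
    simp [inner_toEuclideanCLM, e]
  calc |M i i| ≤ ‖e‖ * ‖toEuclideanCLM (𝕜 := ℝ) M e‖ := hMii ▸ abs_real_inner_le_norm _ _
    _ ≤ ‖e‖ * (‖M‖ * ‖e‖) := by gcongr; exact (toEuclideanCLM (𝕜 := ℝ) M).le_opNorm e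
    _ = ‖M‖ := by rw [he]; ring

lemma abs_trace_le_card_mul_l2_opNorm (M : Matrix n n ℝ) :
    |M.trace| ≤ Fintype.card n * ‖M‖ := by
  calc |M.trace| ≤ ∑ i, |M i i| := Finset.abs_sum_le_sum_abs _ _
    _ ≤ ∑ _i : n, ‖M‖ := Finset.sum_le_sum fun i _ => abs_apply_self_le_l2_opNorm M i
    _ = Fintype.card n * ‖M‖ := by simp

lemma l2_opNorm_mul_mul_le_of_isHermitian {S : Matrix n n ℝ} (hS : S.IsHermitian)
    (M : Matrix n n ℝ) : ‖S * M * S‖ ≤ ‖S * S‖ * ‖M‖ := by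
  have hSS : ‖S * S‖ = ‖S‖ * ‖S‖ := by
    simpa only [hS.eq] using l2_opNorm_conjTranspose_mul_self S
  calc ‖S * M * S‖ ≤ ‖S‖ * ‖M‖ * ‖S‖ :=
        (l2_opNorm_mul _ _).trans (by gcongr; exact l2_opNorm_mul _ _)
    _ = ‖S * S‖ * ‖M‖ := by rw [hSS]; ring

lemma PosDef.log_det_le_trace_sub_card {C : Matrix n n ℝ} (hC : C.PosDef) :
    Real.log C.det ≤ C.trace - Fintype.card n := by
  have hpos := hC.eigenvalues_pos
  rw [hC.1.det_eq_prod_eigenvalues, hC.1.trace_eq_sum_eigenvalues]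
  simp only [RCLike.ofReal_real_eq_id, id]
  rw [Real.log_prod fun i _ => (hpos i).ne', Fintype.card_eq_sum_ones, Nat.cast_sum, Nat.cast_one,
    ← Finset.sum_sub_distrib]
  exact Finset.sum_le_sum fun i _ => Real.log_le_sub_one_of_pos (hpos i)

lemma PosDef.log_det_sub_log_det_le {A B : Matrix n n ℝ} (hA : A.PosDef) (hB : B.PosDef) :
    Real.log A.det - Real.log B.det ≤ Fintype.card n * ‖B⁻¹‖ * ‖A - B‖ := by
  set S := CFC.sqrt B⁻¹
  have hS : S.PosDef := hB.inv.isStrictlyPositive.sqrt.posDef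
  have hSS : S * S = B⁻¹ := CFC.sqrt_mul_sqrt_self _ hB.inv.posSemidef.nonneg
  have hC : (S * A * S).PosDef := by
    simpa only [star_eq_conjTranspose, hS.1.eq] using
      (hS.isUnit.posDef_star_right_conjugate_iff (x := A)).mpr hA
  have hlog : Real.log (S * A * S).det = Real.log A.det - Real.log B.det := by
    rw [det_mul, det_mul, mul_right_comm, ← det_mul, hSS, det_nonsing_inv, Ring.inverse_eq_inv,
      Real.log_mul (inv_pos.mpr hB.det_pos).ne' hA.det_pos.ne', Real.log_inv, neg_add_eq_sub]
  have htrace : (S * B * S).trace = Fintype.card n := by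
    rw [trace_mul_cycle, hSS, nonsing_inv_mul B hB.det_pos.ne'.isUnit, trace_one]
  calc Real.log A.det - Real.log B.det = Real.log (S * A * S).det := hlog.symm
    _ ≤ (S * A * S).trace - Fintype.card n := hC.log_det_le_trace_sub_card
    _ = (S * (A - B) * S).trace := by rw [← htrace, ← trace_sub, mul_sub, sub_mul]
    _ ≤ Fintype.card n * ‖S * (A - B) * S‖ :=
        (le_abs_self _).trans (abs_trace_le_card_mul_l2_opNorm _)
    _ ≤ Fintype.card n * (‖B⁻¹‖ * ‖A - B‖) := by
        gcongr; exact hSS ▸ l2_opNorm_mul_mul_le_of_isHermitian hS.1 _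
    _ = Fintype.card n * ‖B⁻¹‖ * ‖A - B‖ := (mul_assoc _ _ _).symm

end Matrix

theorem stmt2 {n : ℕ} (A B : Matrix (Fin n) (Fin n) ℝ)
    (hA : A.PosDef) (hB : B.PosDef) :
    |Real.log A.det - Real.log B.det| ≤
      (n : ℝ) * max (specNorm A⁻¹) (specNorm B⁻¹) * specNorm (A - B) := by
  have hAB := hA.log_det_sub_log_det_le hB
  have hBA := hB.log_det_sub_log_det_le hA
  rw [norm_sub_rev] at hBA
  rw [Fintype.card_fin] at hAB hBA
  simp only [specNorm_eq_l2_opNorm]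
  rw [abs_sub_le_iff]
  constructor
  · exact hAB.trans (by gcongr; exact le_max_right _ _)
  · exact hBA.trans (by gcongr; exact le_max_left _ _)
end

section
/- The function g(A) = ‖A⁻¹‖₂ is convex on the set of n×n positive definite real matrices: for positive definite A, B and t ∈ [0,1], ‖((1-t)A + tB)⁻¹‖₂ ≤ (1-t)‖A⁻¹‖₂ + t‖B⁻¹‖₂. -/
/-!
For a positive operator `S` with `S * T = 1`, Cauchy–Schwarz for the form `⟪S y, z⟫` at `x` and
`T x` gives `‖x‖ ^ 2 ≤ ‖S‖ * ⟪x, T x⟫`, so the quadratic form of a positive definite `A` is bounded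
below by `‖A⁻¹‖⁻¹ * ‖x‖ ^ 2`.
Such lower bounds add up along `(1 - t) • A + t • B`, and conversely a lower bound `c` on the
quadratic form of an operator bounds the norm of its inverse by `c⁻¹`. Hence
`‖((1 - t) • A + t • B)⁻¹‖ ≤ ((1 - t) * ‖A⁻¹‖⁻¹ + t * ‖B⁻¹‖⁻¹)⁻¹`, which is at most
`(1 - t) * ‖A⁻¹‖ + t * ‖B⁻¹‖` by convexity of `x ↦ x⁻¹` on `(0, ∞)`.
-/

open Matrix

open scoped RealInnerProductSpace

namespace ContinuousLinearMap

variable {E : Type*} [NormedAddCommGroup E] [InnerProductSpace ℝ E]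

theorem IsPositive.sq_norm_le_norm_mul_inner {S T : E →L[ℝ] E} (hS : S.IsPositive)
    (hST : S * T = 1) (x : E) : ‖x‖ ^ 2 ≤ ‖S‖ * ⟪x, T x⟫ := by
  have hSTx : S (T x) = x := by simpa using congr($hST x)
  have hTx : ⟪T x, S (T x)⟫ = ⟪x, T x⟫ := by rw [hSTx, real_inner_comm]
  have hTx_nonneg : 0 ≤ ⟪x, T x⟫ := hTx ▸ hS.inner_nonneg_right (T x)
  have hSx : ⟪x, S x⟫ ≤ ‖S‖ * ‖x‖ ^ 2 :=
    calc ⟪x, S x⟫ ≤ ‖x‖ * ‖S x‖ := real_inner_le_norm _ _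
      _ ≤ ‖x‖ * (‖S‖ * ‖x‖) := by gcongr; exact S.le_opNorm x
      _ = ‖S‖ * ‖x‖ ^ 2 := by ring
  have hcs : ‖x‖ ^ 2 * ‖x‖ ^ 2 ≤ ⟪x, S x⟫ * ⟪x, T x⟫ := by
    simpa [hS.inner_left_eq_inner_right x, hSTx, real_inner_self_eq_norm_sq] using
      LinearMap.BilinForm.apply_mul_apply_le_of_forall_zero_le ((innerₗ E).comp (S : E →ₗ[ℝ] E))
        hS.inner_nonneg_left x (T x)
  rcases (sq_nonneg ‖x‖).eq_or_lt with h0 | hpos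
  · rw [← h0]
    exact mul_nonneg (norm_nonneg S) hTx_nonneg
  · refine le_of_mul_le_mul_left ?_ hpos
    nlinarith [mul_le_mul_of_nonneg_right hSx hTx_nonneg]

theorem norm_le_inv_of_forall_le_inner {S T : E →L[ℝ] E} {c : ℝ} (hc : 0 < c)
    (hT : ∀ x, c * ‖x‖ ^ 2 ≤ ⟪x, T x⟫) (hTS : T * S = 1) : ‖S‖ ≤ c⁻¹ := by
  refine opNorm_le_bound _ (by positivity) fun x => ?_
  have hTSx : T (S x) = x := by simpa using congr($hTS x)
  have h : c * ‖S x‖ ^ 2 ≤ ‖S x‖ * ‖x‖ :=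
    calc c * ‖S x‖ ^ 2 ≤ ⟪S x, x⟫ := by simpa [hTSx] using hT (S x)
      _ ≤ ‖S x‖ * ‖x‖ := real_inner_le_norm _ _
  rw [inv_mul_eq_div, le_div_iff₀ hc]
  rcases (norm_nonneg (S x)).eq_or_lt with h0 | hpos
  · simp [← h0]
  · nlinarith

theorem norm_inv_convexCombination_le {A A' B B' C' : E →L[ℝ] E} (hA' : A'.IsPositive)
    (hB' : B'.IsPositive) (hA : A' * A = 1) (hB : B' * B = 1) {t : ℝ} (ht0 : 0 ≤ t) (ht1 : t ≤ 1)
    (hC : ((1 - t) • A + t • B) * C' = 1) : ‖C'‖ ≤ (1 - t) * ‖A'‖ + t * ‖B'‖ := by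
  rcases subsingleton_or_nontrivial E with hE | hE
  · rw [Subsingleton.elim C' 0, norm_zero]
    have : 0 ≤ 1 - t := sub_nonneg.2 ht1
    positivity
  have ha : 0 < ‖A'‖⁻¹ := inv_pos.2 (norm_pos_iff.2 (left_ne_zero_of_mul_eq_one hA))
  have hb : 0 < ‖B'‖⁻¹ := inv_pos.2 (norm_pos_iff.2 (left_ne_zero_of_mul_eq_one hB))
  set μ := (1 - t) * ‖A'‖⁻¹ + t * ‖B'‖⁻¹
  have hμ : 0 < μ := by simpa using convex_Ioi (0 : ℝ) ha hb (sub_nonneg.2 ht1) ht0 (by ring)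
  have hlow : ∀ x, μ * ‖x‖ ^ 2 ≤ ⟪x, ((1 - t) • A + t • B) x⟫ := by
    intro x
    have hAx : ‖A'‖⁻¹ * ‖x‖ ^ 2 ≤ ⟪x, A x⟫ :=
      (inv_mul_le_iff₀ (inv_pos.1 ha)).2 (hA'.sq_norm_le_norm_mul_inner hA x)
    have hBx : ‖B'‖⁻¹ * ‖x‖ ^ 2 ≤ ⟪x, B x⟫ :=
      (inv_mul_le_iff₀ (inv_pos.1 hb)).2 (hB'.sq_norm_le_norm_mul_inner hB x)
    calc μ * ‖x‖ ^ 2 = (1 - t) * (‖A'‖⁻¹ * ‖x‖ ^ 2) + t * (‖B'‖⁻¹ * ‖x‖ ^ 2) := by ring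
      _ ≤ (1 - t) * ⟪x, A x⟫ + t * ⟪x, B x⟫ := by gcongr
      _ = ⟪x, ((1 - t) • A + t • B) x⟫ := by
        simp only [_root_.add_apply, _root_.smul_apply, inner_add_right, real_inner_smul_right]
  calc ‖C'‖ ≤ μ⁻¹ := norm_le_inv_of_forall_le_inner hμ hlow hC
    _ ≤ (1 - t) * ‖A'‖⁻¹⁻¹ + t * ‖B'‖⁻¹⁻¹ := by
      simpa using (convexOn_zpow (𝕜 := ℝ) (-1)).2 ha hb (sub_nonneg.2 ht1) ht0 (by ring)
    _ = (1 - t) * ‖A'‖ + t * ‖B'‖ := by simp only [inv_inv]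

end ContinuousLinearMap

namespace Matrix

open scoped ComplexOrder

theorem convex_setOf_posDef {n : Type*} [Fintype n] :
    Convex ℝ {M : Matrix n n ℝ | M.PosDef} := by
  intro A hA B hB a b ha hb hab
  rcases ha.eq_or_lt with rfl | ha
  · simpa [show b = 1 by linarith] using hB
  · exact (hA.smul ha).add_posSemidef (hB.posSemidef.smul hb)

variable {n 𝕜 : Type*} [Fintype n] [DecidableEq n] [RCLike 𝕜]

theorem PosSemidef.isPositive_toEuclideanCLM {M : Matrix n n 𝕜} (hM : M.PosSemidef) :
    (toEuclideanCLM (n := n) (𝕜 := 𝕜) M).IsPositive :=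
  isPositive_toEuclideanLin_iff.2 hM

theorem toEuclideanCLM_nonsing_inv_mul {M : Matrix n n 𝕜} (hM : IsUnit M) :
    toEuclideanCLM (n := n) (𝕜 := 𝕜) M⁻¹ * toEuclideanCLM (n := n) (𝕜 := 𝕜) M = 1 := by
  rw [← map_mul, nonsing_inv_mul M ((isUnit_iff_isUnit_det M).1 hM), map_one]

theorem toEuclideanCLM_mul_nonsing_inv {M : Matrix n n 𝕜} (hM : IsUnit M) :
    toEuclideanCLM (n := n) (𝕜 := 𝕜) M * toEuclideanCLM (n := n) (𝕜 := 𝕜) M⁻¹ = 1 := by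
  rw [← map_mul, mul_nonsing_inv M ((isUnit_iff_isUnit_det M).1 hM), map_one]

end Matrix

theorem specNorm_eq_norm_toEuclideanCLM {n : Type*} [Fintype n] [DecidableEq n]
    (M : Matrix n n ℝ) : specNorm M = ‖toEuclideanCLM (n := n) (𝕜 := ℝ) M‖ :=
  rfl

theorem stmt3 {n : ℕ} (A B : Matrix (Fin n) (Fin n) ℝ)
    (hA : A.PosDef) (hB : B.PosDef) (t : ℝ) (ht0 : 0 ≤ t) (ht1 : t ≤ 1) :
    specNorm ((1 - t) • A + t • B)⁻¹ ≤ (1 - t) * specNorm A⁻¹ + t * specNorm B⁻¹ := by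
  have hC : ((1 - t) • A + t • B).PosDef :=
    convex_setOf_posDef hA hB (sub_nonneg.2 ht1) ht0 (by ring)
  have hCinv := toEuclideanCLM_mul_nonsing_inv hC.isUnit
  rw [map_add, map_smul, map_smul] at hCinv
  simp only [specNorm_eq_norm_toEuclideanCLM]
  exact ContinuousLinearMap.norm_inv_convexCombination_le
    (PosSemidef.isPositive_toEuclideanCLM hA.inv.posSemidef)
    (PosSemidef.isPositive_toEuclideanCLM hB.inv.posSemidef)
    (toEuclideanCLM_nonsing_inv_mul hA.isUnit) (toEuclideanCLM_nonsing_inv_mul hB.isUnit)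
    ht0 ht1 hCinv
end

section
/- Let c₁, c₂, δ > 0 and let M = [[A, Bᵀ],[B, C]] and M̂ = [[Â, B̂ᵀ],[B̂, Ĉ]] be symmetric block matrices (A, Â of size n×n; C, Ĉ of size m×m) satisfying c₁·I ⪯ M ⪯ c₂·I, c₁·I ⪯ M̂ ⪯ c₂·I, and ‖M - M̂‖₂ ≤ δ. Then the Schur complements satisfy ‖(C - B A⁻¹ Bᵀ) - (Ĉ - B̂ Â⁻¹ B̂ᵀ)‖₂ ≤ δ(1 + c₂²/c₁²). -/
/-!
Write `S = C - B A⁻¹ Bᵀ` and `Ŝ` for the two Schur complements. For `y`, take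
`z = (-Â⁻¹ B̂ᵀ y, y)`. Completing the square gives `zᵀ M̂ z = yᵀ Ŝ y` exactly and
`zᵀ M z ≥ yᵀ S y`, so `yᵀ (S - Ŝ) y ≤ zᵀ (M - M̂) z ≤ δ ‖z‖²`. Finally
`‖Â⁻¹ B̂ᵀ y‖ ≤ c₁⁻¹ ‖B̂ᵀ‖ ‖y‖ ≤ (c₂ / c₁) ‖y‖`, since `Â ⪰ c₁` and `B̂ᵀ` is a block of `M̂`, whose
norm is at most `c₂`. Swapping the roles of `M` and `M̂` bounds `|yᵀ (S - Ŝ) y|`, which controls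
the norm of the symmetric matrix `S - Ŝ`.
-/

open Matrix

open WithLp

section SpectralNorm

variable {ι κ : Type*} [Fintype ι] [Fintype κ]

lemma real_inner_toLp_toLp (x y : ι → ℝ) : inner ℝ (toLp 2 x) (toLp 2 y) = x ⬝ᵥ y := by
  rw [EuclideanSpace.inner_toLp_toLp, star_trivial, dotProduct_comm]

lemma norm_toLp_sq (x : ι → ℝ) : ‖toLp 2 x‖ ^ 2 = x ⬝ᵥ x := by
  rw [← real_inner_self_eq_norm_sq, real_inner_toLp_toLp]

lemma dotProduct_self_nonneg (x : ι → ℝ) : 0 ≤ x ⬝ᵥ x :=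
  norm_toLp_sq x ▸ sq_nonneg _

variable [DecidableEq ι]

lemma toContinuousLinearMap_toEuclideanLin_toLp (D : Matrix κ ι ℝ) (x : ι → ℝ) :
    LinearMap.toContinuousLinearMap (toEuclideanLin D) (toLp 2 x) = toLp 2 (D *ᵥ x) := rfl

lemma specNorm_nonneg (D : Matrix κ ι ℝ) : 0 ≤ specNorm D := norm_nonneg _

lemma specNorm_neg (D : Matrix κ ι ℝ) : specNorm (-D) = specNorm D := by
  rw [specNorm, specNorm, map_neg, map_neg, norm_neg]

lemma mulVec_dotProduct_mulVec_le (D : Matrix κ ι ℝ) (x : ι → ℝ) :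
    (D *ᵥ x) ⬝ᵥ (D *ᵥ x) ≤ specNorm D ^ 2 * (x ⬝ᵥ x) := by
  rw [← norm_toLp_sq, ← norm_toLp_sq, ← mul_pow, ← toContinuousLinearMap_toEuclideanLin_toLp]
  gcongr
  exact ContinuousLinearMap.le_opNorm _ _

lemma dotProduct_mulVec_le_specNorm_mul (D : Matrix ι ι ℝ) (x : ι → ℝ) :
    x ⬝ᵥ D *ᵥ x ≤ specNorm D * (x ⬝ᵥ x) := by
  set T := LinearMap.toContinuousLinearMap (toEuclideanLin D)
  rw [← norm_toLp_sq, ← real_inner_toLp_toLp, ← toContinuousLinearMap_toEuclideanLin_toLp]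
  calc _ ≤ ‖toLp 2 x‖ * ‖T (toLp 2 x)‖ := real_inner_le_norm _ _
    _ ≤ ‖toLp 2 x‖ * (‖T‖ * ‖toLp 2 x‖) := by gcongr; exact T.le_opNorm _
    _ = _ := by rw [specNorm]; ring

lemma specNorm_le_of_abs_dotProduct_mulVec_le {D : Matrix ι ι ℝ} (hD : D.IsHermitian) {t : ℝ}
    (ht : 0 ≤ t) (h : ∀ x, |x ⬝ᵥ D *ᵥ x| ≤ t * (x ⬝ᵥ x)) : specNorm D ≤ t := by
  rw [specNorm, ContinuousLinearMap.norm_eq_iSup_rayleighQuotient _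
    (isSymmetric_toEuclideanLin_iff.mpr hD)]
  refine ciSup_le fun v => ?_
  rw [← toLp_ofLp 2 v, ContinuousLinearMap.rayleighQuotient,
    ContinuousLinearMap.reApplyInnerSelf_apply, toContinuousLinearMap_toEuclideanLin_toLp,
    RCLike.re_to_real, real_inner_toLp_toLp, norm_toLp_sq, dotProduct_comm, abs_div,
    abs_of_nonneg (dotProduct_self_nonneg _)]
  exact div_le_of_le_mul₀ (dotProduct_self_nonneg _) ht (h _)

end SpectralNorm

section LoewnerBounds

variable {ι : Type*} [DecidableEq ι] {W : Matrix ι ι ℝ} {c : ℝ}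

lemma posSemidef_of_posSemidef_sub_smul (hc : 0 ≤ c) (h : (W - c • 1).PosSemidef) :
    W.PosSemidef := by
  simpa using h.add (PosSemidef.one.smul hc)

lemma posDef_of_posSemidef_sub_smul (hc : 0 < c) (h : (W - c • 1).PosSemidef) : W.PosDef := by
  simpa using PosDef.posSemidef_add h (PosDef.one.smul hc)

variable [Fintype ι]

lemma mul_dotProduct_self_le_of_posSemidef_sub (h : (W - c • 1).PosSemidef) (x : ι → ℝ) :
    c * (x ⬝ᵥ x) ≤ x ⬝ᵥ W *ᵥ x := by
  have := h.dotProduct_mulVec_nonneg x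
  simp only [star_trivial, sub_mulVec, smul_mulVec, one_mulVec, dotProduct_sub,
    dotProduct_smul, smul_eq_mul] at this
  linarith

lemma dotProduct_mulVec_le_of_posSemidef_sub (h : (c • 1 - W).PosSemidef) (x : ι → ℝ) :
    x ⬝ᵥ W *ᵥ x ≤ c * (x ⬝ᵥ x) := by
  have := h.dotProduct_mulVec_nonneg x
  simp only [star_trivial, sub_mulVec, smul_mulVec, one_mulVec, dotProduct_sub,
    dotProduct_smul, smul_eq_mul] at this
  linarith

lemma specNorm_le_of_posSemidef (hW : W.PosSemidef) (h : (c • 1 - W).PosSemidef) (hc : 0 ≤ c) :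
    specNorm W ≤ c := by
  refine specNorm_le_of_abs_dotProduct_mulVec_le hW.isHermitian hc fun x =>
    abs_le.mpr ⟨?_, dotProduct_mulVec_le_of_posSemidef_sub h x⟩
  have hx := hW.dotProduct_mulVec_nonneg x
  rw [star_trivial] at hx
  linarith [mul_nonneg hc (dotProduct_self_nonneg x)]

lemma inv_mulVec_dotProduct_mulVec_le (hc : 0 < c) (h : (W - c • 1).PosSemidef) (y : ι → ℝ) :
    (W⁻¹ *ᵥ y) ⬝ᵥ (W⁻¹ *ᵥ y) ≤ (y ⬝ᵥ y) / c ^ 2 := by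
  set v := W⁻¹ *ᵥ y
  have hWv : W *ᵥ v = y := by
    rw [mulVec_mulVec, mul_nonsing_inv _ ((isUnit_iff_isUnit_det W).mp
      (posDef_of_posSemidef_sub_smul hc h).isUnit), one_mulVec]
  have hcv : c * ‖toLp 2 v‖ ^ 2 ≤ ‖toLp 2 v‖ * ‖toLp 2 y‖ :=
    calc c * ‖toLp 2 v‖ ^ 2 ≤ v ⬝ᵥ W *ᵥ v := by
          rw [norm_toLp_sq]; exact mul_dotProduct_self_le_of_posSemidef_sub h v
      _ = inner ℝ (toLp 2 v) (toLp 2 y) := by rw [hWv, real_inner_toLp_toLp]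
      _ ≤ ‖toLp 2 v‖ * ‖toLp 2 y‖ := real_inner_le_norm _ _
  have hcv' : c * ‖toLp 2 v‖ ≤ ‖toLp 2 y‖ := by
    rcases (norm_nonneg (toLp 2 v)).eq_or_lt with hv | hv
    · rw [← hv, mul_zero]; exact norm_nonneg _
    · nlinarith
  rw [← norm_toLp_sq, ← norm_toLp_sq, le_div_iff₀ (by positivity), ← mul_pow, mul_comm]
  gcongr

end LoewnerBounds

section BlockMatrices

variable {ι κ : Type*} [DecidableEq ι]

lemma posSemidef_sub_smul_of_fromBlocks_sub_smul [DecidableEq κ] {A : Matrix ι ι ℝ}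
    {B : Matrix ι κ ℝ} {C : Matrix κ ι ℝ} {D : Matrix κ κ ℝ} {c : ℝ}
    (h : (fromBlocks A B C D - c • 1).PosSemidef) : (A - c • 1).PosSemidef := by
  convert h.submatrix Sum.inl using 1
  ext i j
  simp [one_apply]

variable [Fintype ι]

lemma isHermitian_schur_of_fromBlocks {A : Matrix ι ι ℝ} (hA : A.IsHermitian) {B : Matrix κ ι ℝ}
    {C : Matrix κ κ ℝ} (hM : (fromBlocks A Bᵀ B C).IsHermitian) :
    (C - B * A⁻¹ * Bᵀ).IsHermitian := by
  simpa [conjTranspose_eq_transpose_of_trivial] using (IsHermitian.fromBlocks₁₁ Bᵀ C hA).mp hM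

variable [Fintype κ]

lemma dotProduct_fromBlocks_mulVec_eq_schur {A : Matrix ι ι ℝ} (hA : A.PosDef) (B : Matrix κ ι ℝ)
    (C : Matrix κ κ ℝ) (x : ι → ℝ) (y : κ → ℝ) :
    Sum.elim x y ⬝ᵥ fromBlocks A Bᵀ B C *ᵥ Sum.elim x y
      = (x + (A⁻¹ * Bᵀ) *ᵥ y) ⬝ᵥ A *ᵥ (x + (A⁻¹ * Bᵀ) *ᵥ y)
        + y ⬝ᵥ (C - B * A⁻¹ * Bᵀ) *ᵥ y := by
  let := hA.isUnit.invertible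
  simpa [dotProduct_mulVec, conjTranspose_eq_transpose_of_trivial] using
    schur_complement_eq₁₁ Bᵀ C x y hA.isHermitian

lemma dotProduct_schur_mulVec_le {A : Matrix ι ι ℝ} (hA : A.PosDef) (B : Matrix κ ι ℝ)
    (C : Matrix κ κ ℝ) (x : ι → ℝ) (y : κ → ℝ) :
    y ⬝ᵥ (C - B * A⁻¹ * Bᵀ) *ᵥ y ≤ Sum.elim x y ⬝ᵥ fromBlocks A Bᵀ B C *ᵥ Sum.elim x y := by
  rw [dotProduct_fromBlocks_mulVec_eq_schur hA]
  have := hA.posSemidef.dotProduct_mulVec_nonneg (x + (A⁻¹ * Bᵀ) *ᵥ y)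
  rw [star_trivial] at this
  linarith

lemma dotProduct_schur_mulVec_eq {A : Matrix ι ι ℝ} (hA : A.PosDef) (B : Matrix κ ι ℝ)
    (C : Matrix κ κ ℝ) (y : κ → ℝ) :
    y ⬝ᵥ (C - B * A⁻¹ * Bᵀ) *ᵥ y
      = Sum.elim (-((A⁻¹ * Bᵀ) *ᵥ y)) y ⬝ᵥ fromBlocks A Bᵀ B C *ᵥ
          Sum.elim (-((A⁻¹ * Bᵀ) *ᵥ y)) y := by
  rw [dotProduct_fromBlocks_mulVec_eq_schur hA, neg_add_cancel, zero_dotProduct, zero_add]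

variable [DecidableEq κ]

lemma mulVec_dotProduct_mulVec_le_fromBlocks₁₂ (A : Matrix ι ι ℝ) (B : Matrix ι κ ℝ)
    (C : Matrix κ ι ℝ) (D : Matrix κ κ ℝ) (y : κ → ℝ) :
    (B *ᵥ y) ⬝ᵥ (B *ᵥ y) ≤ specNorm (fromBlocks A B C D) ^ 2 * (y ⬝ᵥ y) := by
  have := mulVec_dotProduct_mulVec_le (fromBlocks A B C D) (Sum.elim 0 y)
  simp only [fromBlocks_mulVec, mulVec_zero, zero_add, Sum.elim_comp_inl, Sum.elim_comp_inr,
    sumElim_dotProduct_sumElim, dotProduct_zero] at this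
  linarith [dotProduct_self_nonneg (D *ᵥ y)]

lemma dotProduct_schur_sub_mulVec_le {c₁ c₂ δ : ℝ} (hc₁ : 0 < c₁)
    {A Ahat : Matrix ι ι ℝ} {B Bhat : Matrix κ ι ℝ} {C Chat : Matrix κ κ ℝ}
    (hA : A.PosDef) (hAhat : (Ahat - c₁ • 1).PosSemidef)
    (hMhat : specNorm (fromBlocks Ahat Bhatᵀ Bhat Chat) ≤ c₂)
    (hdiff : specNorm (fromBlocks A Bᵀ B C - fromBlocks Ahat Bhatᵀ Bhat Chat) ≤ δ) (y : κ → ℝ) :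
    y ⬝ᵥ ((C - B * A⁻¹ * Bᵀ) - (Chat - Bhat * Ahat⁻¹ * Bhatᵀ)) *ᵥ y
      ≤ δ * (1 + c₂ ^ 2 / c₁ ^ 2) * (y ⬝ᵥ y) := by
  have hS := dotProduct_schur_mulVec_le hA B C (-((Ahat⁻¹ * Bhatᵀ) *ᵥ y)) y
  have hShat := dotProduct_schur_mulVec_eq (posDef_of_posSemidef_sub_smul hc₁ hAhat) Bhat Chat y
  set u := (Ahat⁻¹ * Bhatᵀ) *ᵥ y with hu_def
  set z := Sum.elim (-u) y
  have hu : u ⬝ᵥ u ≤ c₂ ^ 2 / c₁ ^ 2 * (y ⬝ᵥ y) :=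
    calc u ⬝ᵥ u ≤ (Bhatᵀ *ᵥ y) ⬝ᵥ (Bhatᵀ *ᵥ y) / c₁ ^ 2 := by
          rw [hu_def, ← mulVec_mulVec]; exact inv_mulVec_dotProduct_mulVec_le hc₁ hAhat _
      _ ≤ c₂ ^ 2 * (y ⬝ᵥ y) / c₁ ^ 2 := by
          gcongr
          refine (mulVec_dotProduct_mulVec_le_fromBlocks₁₂ Ahat _ Bhat Chat y).trans ?_
          gcongr
          · exact dotProduct_self_nonneg y
          · exact specNorm_nonneg _
      _ = c₂ ^ 2 / c₁ ^ 2 * (y ⬝ᵥ y) := by ring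
  have hz : z ⬝ᵥ z = u ⬝ᵥ u + y ⬝ᵥ y := by
    rw [sumElim_dotProduct_sumElim, neg_dotProduct, dotProduct_neg, neg_neg]
  have hδ : 0 ≤ δ := (specNorm_nonneg _).trans hdiff
  calc y ⬝ᵥ ((C - B * A⁻¹ * Bᵀ) - (Chat - Bhat * Ahat⁻¹ * Bhatᵀ)) *ᵥ y
      ≤ z ⬝ᵥ (fromBlocks A Bᵀ B C - fromBlocks Ahat Bhatᵀ Bhat Chat) *ᵥ z := by
        rw [sub_mulVec (C - _), dotProduct_sub, sub_mulVec (fromBlocks _ _ _ _), dotProduct_sub]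
        linarith
    _ ≤ δ * (z ⬝ᵥ z) := (dotProduct_mulVec_le_specNorm_mul _ z).trans
        (mul_le_mul_of_nonneg_right hdiff (dotProduct_self_nonneg z))
    _ ≤ δ * (c₂ ^ 2 / c₁ ^ 2 * (y ⬝ᵥ y) + y ⬝ᵥ y) := by rw [hz]; gcongr
    _ = δ * (1 + c₂ ^ 2 / c₁ ^ 2) * (y ⬝ᵥ y) := by ring

end BlockMatrices

theorem stmt6_general {n m : ℕ} (c₁ c₂ δ : ℝ) (hc₁ : 0 < c₁) (hc₂ : 0 < c₂)
    (A Ahat : Matrix (Fin n) (Fin n) ℝ) (B Bhat : Matrix (Fin m) (Fin n) ℝ)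
    (C Chat : Matrix (Fin m) (Fin m) ℝ)
    (hM1 : (Matrix.fromBlocks A Bᵀ B C
      - c₁ • (1 : Matrix (Fin n ⊕ Fin m) (Fin n ⊕ Fin m) ℝ)).PosSemidef)
    (hM2 : (c₂ • (1 : Matrix (Fin n ⊕ Fin m) (Fin n ⊕ Fin m) ℝ)
      - Matrix.fromBlocks A Bᵀ B C).PosSemidef)
    (hMhat1 : (Matrix.fromBlocks Ahat Bhatᵀ Bhat Chat
      - c₁ • (1 : Matrix (Fin n ⊕ Fin m) (Fin n ⊕ Fin m) ℝ)).PosSemidef)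
    (hMhat2 : (c₂ • (1 : Matrix (Fin n ⊕ Fin m) (Fin n ⊕ Fin m) ℝ)
      - Matrix.fromBlocks Ahat Bhatᵀ Bhat Chat).PosSemidef)
    (hdiff : specNorm (Matrix.fromBlocks A Bᵀ B C - Matrix.fromBlocks Ahat Bhatᵀ Bhat Chat) ≤ δ) :
    specNorm ((C - B * A⁻¹ * Bᵀ) - (Chat - Bhat * Ahat⁻¹ * Bhatᵀ)) ≤ δ * (1 + c₂ ^ 2 / c₁ ^ 2) := by
  have hA := posSemidef_sub_smul_of_fromBlocks_sub_smul hM1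
  have hAhat := posSemidef_sub_smul_of_fromBlocks_sub_smul hMhat1
  have hApos := posDef_of_posSemidef_sub_smul hc₁ hA
  have hAhatpos := posDef_of_posSemidef_sub_smul hc₁ hAhat
  have hM := posSemidef_of_posSemidef_sub_smul hc₁.le hM1
  have hMhat := posSemidef_of_posSemidef_sub_smul hc₁.le hMhat1
  have hdiff' : specNorm (fromBlocks Ahat Bhatᵀ Bhat Chat - fromBlocks A Bᵀ B C) ≤ δ := by
    rwa [← neg_sub, specNorm_neg]
  have hSchur := (isHermitian_schur_of_fromBlocks hApos.isHermitian hM.isHermitian).sub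
    (isHermitian_schur_of_fromBlocks hAhatpos.isHermitian hMhat.isHermitian)
  have hupper := dotProduct_schur_sub_mulVec_le hc₁ hApos hAhat
    (specNorm_le_of_posSemidef hMhat hMhat2 hc₂.le) hdiff
  have hlower := dotProduct_schur_sub_mulVec_le hc₁ hAhatpos hA
    (specNorm_le_of_posSemidef hM hM2 hc₂.le) hdiff'
  refine specNorm_le_of_abs_dotProduct_mulVec_le hSchur
    (mul_nonneg ((specNorm_nonneg _).trans hdiff) (by positivity)) fun y =>
      abs_le.mpr ⟨?_, hupper y⟩
  have := hlower y
  rw [← neg_sub, neg_mulVec, dotProduct_neg] at this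
  linarith

theorem stmt6 {n m : ℕ} (c₁ c₂ δ : ℝ) (hc₁ : 0 < c₁) (hc₂ : 0 < c₂) (hδ : 0 < δ)
    (A Ahat : Matrix (Fin n) (Fin n) ℝ) (B Bhat : Matrix (Fin m) (Fin n) ℝ)
    (C Chat : Matrix (Fin m) (Fin m) ℝ)
    (hA : A.IsSymm) (hAhat : Ahat.IsSymm) (hC : C.IsSymm) (hChat : Chat.IsSymm)
    (hM1 : (Matrix.fromBlocks A Bᵀ B C
      - c₁ • (1 : Matrix (Fin n ⊕ Fin m) (Fin n ⊕ Fin m) ℝ)).PosSemidef)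
    (hM2 : (c₂ • (1 : Matrix (Fin n ⊕ Fin m) (Fin n ⊕ Fin m) ℝ)
      - Matrix.fromBlocks A Bᵀ B C).PosSemidef)
    (hMhat1 : (Matrix.fromBlocks Ahat Bhatᵀ Bhat Chat
      - c₁ • (1 : Matrix (Fin n ⊕ Fin m) (Fin n ⊕ Fin m) ℝ)).PosSemidef)
    (hMhat2 : (c₂ • (1 : Matrix (Fin n ⊕ Fin m) (Fin n ⊕ Fin m) ℝ)
      - Matrix.fromBlocks Ahat Bhatᵀ Bhat Chat).PosSemidef)
    (hdiff : specNorm (Matrix.fromBlocks A Bᵀ B C - Matrix.fromBlocks Ahat Bhatᵀ Bhat Chat) ≤ δ) :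
    specNorm ((C - B * A⁻¹ * Bᵀ) - (Chat - Bhat * Ahat⁻¹ * Bhatᵀ)) ≤ δ * (1 + c₂ ^ 2 / c₁ ^ 2) :=
  stmt6_general c₁ c₂ δ hc₁ hc₂ A Ahat B Bhat C Chat hM1 hM2 hMhat1 hMhat2 hdiff
end

section
/- Let F₀, …, F_{M-1} be the selection matrices with F_k = (1/√M)[0 I 0] picking out coordinates kn through (k+p+1)n-1 of ℝ^{(M+p)n}, and let v ∈ ℝ^{(p+1)n} with ‖v‖₂ ≤ 1. Then ‖Σ_{k=0}^{M-1} F_kᵀ v vᵀ F_k‖_F² ≤ (2p+1)/M and ‖Σ_{k=0}^{M-1} F_kᵀ v vᵀ F_k‖₂ ≤ (p+1)/M. -/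
/-!
Write `g k = (F k)ᵀ v` and let `G` be the matrix with rows `g k`, so that the sum is `Gᵀ G`.
Since `F k (F k)ᵀ = I / M` and `F k (F k')ᵀ = 0` for `|k - k'| > p`, the Gram matrix `G Gᵀ`
is banded of width `p` with entries bounded by `‖v‖² / M` (Cauchy–Schwarz), and
`‖Gᵀ G‖_F = ‖G Gᵀ‖_F` gives the Frobenius bound. For the spectral bound,
`‖Gᵀ G‖₂ = ‖G‖₂²` and `(G y) k = vᵀ (F k y)`, so
`∑ k, (G y) k ^ 2 ≤ ∑ k, ‖F k y‖² ≤ (p + 1) ‖y‖² / M`, because each coordinate of `y` lies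
in at most `p + 1` windows.
-/

open Matrix

/-- Frobenius norm of a real matrix. -/
noncomputable def frobNorm {m n : Type*} [Fintype m] [Fintype n]
    (A : Matrix m n ℝ) : ℝ :=
  Real.sqrt (∑ i, ∑ j, (A i j) ^ 2)

/-- The selection matrix `F k = (1/√M)[0 I 0]` picking out the window of
block-coordinates `k, …, k+p` out of `M+p` blocks of size `n`. -/
noncomputable def selMatrix (M p n k : ℕ) :
    Matrix (Fin (p + 1) × Fin n) (Fin (M + p) × Fin n) ℝ :=
  fun li jd => if (jd.1 : ℕ) = k + (li.1 : ℕ) ∧ li.2 = jd.2 then 1 / Real.sqrt M else 0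

open Finset
open scoped Matrix.Norms.L2Operator

section Norms

variable {ι κ : Type*} [Fintype ι]

lemma mul_transpose_apply_sq_le (G : Matrix κ ι ℝ) (k k' : κ) :
    (G * Gᵀ) k k' ^ 2 ≤ (G * Gᵀ) k k * (G * Gᵀ) k' k' := by
  simpa only [mul_apply, transpose_apply, sq] using sum_mul_sq_le_sq_mul_sq univ (G k) (G k')

variable [Fintype κ]

lemma frobNorm_sq (A : Matrix κ ι ℝ) : frobNorm A ^ 2 = ∑ i, ∑ j, A i j ^ 2 :=
  Real.sq_sqrt (by positivity)

lemma frobNorm_transpose_mul_self (G : Matrix κ ι ℝ) :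
    frobNorm (Gᵀ * G) = frobNorm (G * Gᵀ) := by
  unfold frobNorm
  congr 1
  simp only [mul_apply, transpose_apply, sq, sum_mul_sum]
  calc _ = ∑ a, ∑ k, ∑ b, ∑ k', G k a * G k b * (G k' a * G k' b) :=
        sum_congr rfl fun _ _ => sum_comm
    _ = ∑ k, ∑ a, ∑ k', ∑ b, G k a * G k b * (G k' a * G k' b) :=
        sum_comm.trans (sum_congr rfl fun _ _ => sum_congr rfl fun _ _ => sum_comm)
    _ = _ := sum_congr rfl fun _ _ => sum_comm.trans
        (sum_congr rfl fun _ _ => sum_congr rfl fun _ _ => sum_congr rfl fun _ _ => by ring)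

lemma specNorm_transpose_mul_self [DecidableEq ι] (G : Matrix κ ι ℝ) :
    specNorm (Gᵀ * G) = specNorm G ^ 2 := by
  rw [sq, ← conjTranspose_eq_transpose_of_trivial]
  exact l2_opNorm_conjTranspose_mul_self G

lemma specNorm_sq_le_of_sum_sq_mulVec_le [DecidableEq ι] (A : Matrix κ ι ℝ) {c : ℝ}
    (hc : 0 ≤ c)
    (h : ∀ x, ∑ i, (A *ᵥ x) i ^ 2 ≤ c * ∑ j, x j ^ 2) : specNorm A ^ 2 ≤ c := by
  suffices specNorm A ≤ √c from
    (pow_le_pow_left₀ (norm_nonneg _) this 2).trans_eq (Real.sq_sqrt hc)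
  refine ContinuousLinearMap.opNorm_le_bound _ (Real.sqrt_nonneg c) fun x => ?_
  rw [EuclideanSpace.norm_eq, EuclideanSpace.norm_eq, ← Real.sqrt_mul hc]
  simp only [Real.norm_eq_abs, sq_abs]
  exact Real.sqrt_le_sqrt (h x)

end Norms

lemma sum_sq_le_of_banded {M : ℕ} (p : ℕ) {c : ℝ} (f : Fin M → Fin M → ℝ)
    (hband : ∀ k k' : Fin M, (k : ℕ) + p < k' ∨ (k' : ℕ) + p < k → f k k' = 0)
    (hbound : ∀ k k', f k k' ^ 2 ≤ c) :
    ∑ k, ∑ k', f k k' ^ 2 ≤ M * ((2 * p + 1) * c) := by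
  have hrow (k : Fin M) : ∑ k', f k k' ^ 2 ≤ (2 * p + 1) * c := by
    set near := univ.filter fun k' : Fin M => (k : ℕ) ≤ k' + p ∧ (k' : ℕ) ≤ k + p
    have hnear : #near ≤ 2 * p + 1 := by
      have hsub : near.map Fin.valEmbedding ⊆ Icc ((k : ℕ) - p) (k + p) := by
        intro j hj
        simp only [near, mem_map, mem_filter, mem_univ, true_and, Fin.valEmbedding_apply] at hj
        obtain ⟨k', hk', rfl⟩ := hj
        simp only [mem_Icc]
        omega
      have := (card_le_card hsub).trans_eq (Nat.card_Icc _ _)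
      rw [card_map] at this
      omega
    calc ∑ k', f k k' ^ 2 = ∑ k' ∈ near, f k k' ^ 2 := by
          refine (sum_subset (subset_univ _) fun k' _ hk' => ?_).symm
          simp only [near, mem_filter, mem_univ, true_and] at hk'
          rw [hband k k' (by omega), sq, zero_mul]
      _ ≤ #near • c := sum_le_card_nsmul _ _ _ fun k' _ => hbound k k'
      _ ≤ (2 * p + 1) * c := by
          rw [nsmul_eq_mul]
          exact mul_le_mul_of_nonneg_right (by exact_mod_cast hnear)
            ((sq_nonneg _).trans (hbound k k))
  calc ∑ k, ∑ k', f k k' ^ 2 ≤ ∑ _k : Fin M, (2 * p + 1) * c := sum_le_sum fun k _ => hrow k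
    _ = M * ((2 * p + 1) * c) := by simp

section SelMatrix

variable {M p n : ℕ}

def selWindow (k : Fin M) (i : Fin (p + 1) × Fin n) : Fin (M + p) × Fin n :=
  (⟨k + i.1, by omega⟩, i.2)

lemma selWindow_injective (k : Fin M) : Function.Injective (selWindow (p := p) (n := n) k) := by
  rintro ⟨l, d⟩ ⟨l', d'⟩ h
  simp only [selWindow, Prod.mk.injEq, Fin.mk.injEq, add_right_inj] at h
  exact Prod.ext (Fin.ext h.1) h.2

lemma selMatrix_eq_submatrix (k : Fin M) :
    selMatrix M p n k =
      (√M)⁻¹ • (1 : Matrix (Fin (M + p) × Fin n) _ ℝ).submatrix (selWindow k) id := by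
  ext ⟨l, d⟩ ⟨j, e⟩
  simp [selMatrix, selWindow, one_apply, Prod.ext_iff, Fin.ext_iff, eq_comm]

lemma selMatrix_mul_transpose (k k' : Fin M) :
    selMatrix M p n k * (selMatrix M p n k')ᵀ =
      (M : ℝ)⁻¹ •
        (1 : Matrix (Fin (M + p) × Fin n) _ ℝ).submatrix (selWindow k) (selWindow k') := by
  rw [selMatrix_eq_submatrix, selMatrix_eq_submatrix, transpose_smul, transpose_submatrix,
    transpose_one, Matrix.smul_mul, Matrix.mul_smul, smul_smul,
    ← submatrix_mul _ _ _ _ _ Function.bijective_id, mul_one, ← mul_inv,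
    Real.mul_self_sqrt M.cast_nonneg]

lemma selMatrix_mul_transpose_self (k : Fin M) :
    selMatrix M p n k * (selMatrix M p n k)ᵀ = (M : ℝ)⁻¹ • 1 := by
  rw [selMatrix_mul_transpose, submatrix_one _ (selWindow_injective k)]

lemma selMatrix_mul_transpose_eq_zero {k k' : Fin M}
    (h : (k : ℕ) + p < k' ∨ (k' : ℕ) + p < k) :
    selMatrix M p n k * (selMatrix M p n k')ᵀ = 0 := by
  rw [selMatrix_mul_transpose]
  ext ⟨l, d⟩ ⟨l', d'⟩
  have : selWindow k (l, d) ≠ selWindow k' (l', d') := by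
    simp only [selWindow, ne_eq, Prod.mk.injEq, Fin.mk.injEq, not_and]
    omega
  simp [one_apply_ne this]

lemma selMatrix_mulVec (k : Fin M) (x : Fin (M + p) × Fin n → ℝ) :
    selMatrix M p n k *ᵥ x = (√M)⁻¹ • (x ∘ selWindow k) := by
  ext i
  simp [selMatrix_eq_submatrix, mulVec, dotProduct, one_apply]

lemma sum_comp_selWindow_le {w : Fin (M + p) × Fin n → ℝ} (hw : 0 ≤ w) :
    ∑ k : Fin M, ∑ i, w (selWindow k i) ≤ (p + 1) * ∑ j, w j := by
  have hshift (l : Fin (p + 1)) (d : Fin n) :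
      ∑ k : Fin M, w (selWindow k (l, d)) ≤ ∑ j : Fin (M + p), w (j, d) := by
    let e : Fin M ↪ Fin (M + p) := ⟨fun k => (selWindow k (l, d)).1, fun k k' h => by
      simpa [selWindow, Fin.ext_iff] using h⟩
    change ∑ k, w (e k, d) ≤ _
    rw [← sum_map univ e (fun j => w (j, d))]
    exact sum_le_sum_of_subset_of_nonneg (subset_univ _) fun j _ _ => hw (j, d)
  calc ∑ k : Fin M, ∑ i, w (selWindow k i)
      = ∑ l : Fin (p + 1), ∑ d, ∑ k : Fin M, w (selWindow k (l, d)) := by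
        simp only [Fintype.sum_prod_type]
        rw [sum_comm]
        exact sum_congr rfl fun _ _ => sum_comm
    _ ≤ ∑ _l : Fin (p + 1), ∑ d, ∑ j : Fin (M + p), w (j, d) :=
        sum_le_sum fun l _ => sum_le_sum fun d _ => hshift l d
    _ = (p + 1) * ∑ j, w j := by
        rw [sum_const, card_univ, Fintype.card_fin, nsmul_eq_mul, Fintype.sum_prod_type,
          sum_comm]
        push_cast
        rfl

end SelMatrix

noncomputable def selRows (M p n : ℕ) (v : Fin (p + 1) × Fin n → ℝ) :
    Matrix (Fin M) (Fin (M + p) × Fin n) ℝ :=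
  Matrix.of fun k => v ᵥ* selMatrix M p n k

section SelRows

variable {M p n : ℕ} (v : Fin (p + 1) × Fin n → ℝ)

lemma sum_selMatrix_conj_eq :
    ∑ k ∈ range M, (selMatrix M p n k)ᵀ * vecMulVec v v * selMatrix M p n k =
      (selRows M p n v)ᵀ * selRows M p n v := by
  have hterm (k : ℕ) : (selMatrix M p n k)ᵀ * vecMulVec v v * selMatrix M p n k =
      vecMulVec (v ᵥ* selMatrix M p n k) (v ᵥ* selMatrix M p n k) := by
    rw [mul_vecMulVec, vecMulVec_mul, mulVec_transpose]
  ext a b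
  simp only [hterm, Matrix.sum_apply, vecMulVec_apply, mul_apply, transpose_apply, selRows,
    of_apply]
  exact (Fin.sum_univ_eq_sum_range
    (fun k => (v ᵥ* selMatrix M p n k) a * (v ᵥ* selMatrix M p n k) b) M).symm

lemma selRows_mul_transpose_apply (k k' : Fin M) :
    (selRows M p n v * (selRows M p n v)ᵀ) k k' =
      v ⬝ᵥ (selMatrix M p n k * (selMatrix M p n k')ᵀ) *ᵥ v := by
  rw [← mulVec_mulVec, dotProduct_mulVec, ← vecMul_transpose, transpose_transpose]
  rfl

lemma selRows_mul_transpose_apply_self (k : Fin M) :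
    (selRows M p n v * (selRows M p n v)ᵀ) k k = (M : ℝ)⁻¹ * ∑ i, v i ^ 2 := by
  rw [selRows_mul_transpose_apply, selMatrix_mul_transpose_self, smul_mulVec, one_mulVec,
    dotProduct_smul, smul_eq_mul, dotProduct]
  simp only [sq]

lemma selRows_mul_transpose_apply_eq_zero {k k' : Fin M}
    (h : (k : ℕ) + p < k' ∨ (k' : ℕ) + p < k) :
    (selRows M p n v * (selRows M p n v)ᵀ) k k' = 0 := by
  rw [selRows_mul_transpose_apply, selMatrix_mul_transpose_eq_zero h, zero_mulVec,
    dotProduct_zero]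

lemma sum_sq_selRows_mulVec_le (hv : ∑ i, v i ^ 2 ≤ 1) (y : Fin (M + p) × Fin n → ℝ) :
    ∑ k, (selRows M p n v *ᵥ y) k ^ 2 ≤ (p + 1) / M * ∑ j, y j ^ 2 := by
  have hrow (k : Fin M) :
      (selRows M p n v *ᵥ y) k ^ 2 ≤ (M : ℝ)⁻¹ * ∑ i, y (selWindow k i) ^ 2 := by
    have hdot : (selRows M p n v *ᵥ y) k = (√M)⁻¹ * ∑ i, v i * y (selWindow k i) := by
      change (v ᵥ* selMatrix M p n k) ⬝ᵥ y = _
      rw [← dotProduct_mulVec, selMatrix_mulVec, dotProduct_smul, smul_eq_mul]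
      rfl
    rw [hdot, mul_pow, inv_pow, Real.sq_sqrt M.cast_nonneg]
    gcongr
    calc (∑ i, v i * y (selWindow k i)) ^ 2
        ≤ (∑ i, v i ^ 2) * ∑ i, y (selWindow k i) ^ 2 := sum_mul_sq_le_sq_mul_sq _ _ _
      _ ≤ ∑ i, y (selWindow k i) ^ 2 := mul_le_of_le_one_left (by positivity) hv
  calc ∑ k, (selRows M p n v *ᵥ y) k ^ 2
      ≤ ∑ k : Fin M, (M : ℝ)⁻¹ * ∑ i, y (selWindow k i) ^ 2 := sum_le_sum fun k _ => hrow k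
    _ = (M : ℝ)⁻¹ * ∑ k : Fin M, ∑ i, y (selWindow k i) ^ 2 := (mul_sum _ _ _).symm
    _ ≤ (M : ℝ)⁻¹ * ((p + 1) * ∑ j, y j ^ 2) :=
        mul_le_mul_of_nonneg_left (sum_comp_selWindow_le fun j => sq_nonneg (y j))
          (by positivity)
    _ = (p + 1) / M * ∑ j, y j ^ 2 := by ring

end SelRows

theorem stmt16_general {n : ℕ} (M p : ℕ)
    (v : Fin (p + 1) × Fin n → ℝ) (hv : ∑ i, (v i) ^ 2 ≤ 1) :
    frobNorm (∑ k ∈ Finset.range M,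
        (selMatrix M p n k)ᵀ * Matrix.vecMulVec v v * selMatrix M p n k) ^ 2
      ≤ (2 * p + 1) / M ∧
    specNorm (∑ k ∈ Finset.range M,
        (selMatrix M p n k)ᵀ * Matrix.vecMulVec v v * selMatrix M p n k)
      ≤ (p + 1) / M := by
  set G := selRows M p n v
  rw [sum_selMatrix_conj_eq v, specNorm_transpose_mul_self, frobNorm_transpose_mul_self,
    frobNorm_sq]
  have hgram (k k' : Fin M) : (G * Gᵀ) k k' ^ 2 ≤ ((M : ℝ)⁻¹) ^ 2 := by
    refine (mul_transpose_apply_sq_le G k k').trans ?_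
    rw [selRows_mul_transpose_apply_self, selRows_mul_transpose_apply_self, ← sq]
    gcongr
    exact mul_le_of_le_one_right (by positivity) hv
  constructor
  · calc ∑ k, ∑ k', (G * Gᵀ) k k' ^ 2 ≤ M * ((2 * p + 1) * ((M : ℝ)⁻¹) ^ 2) :=
          sum_sq_le_of_banded p _ (fun k k' h => selRows_mul_transpose_apply_eq_zero v h) hgram
      _ = (2 * p + 1) / M := by
          rcases M.eq_zero_or_pos with rfl | hM <;> field_simp
  · exact specNorm_sq_le_of_sum_sq_mulVec_le G (by positivity)
      (sum_sq_selRows_mulVec_le v hv)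

theorem stmt16 {n : ℕ} (M p : ℕ) (hM : 0 < M)
    (v : Fin (p + 1) × Fin n → ℝ) (hv : ∑ i, (v i) ^ 2 ≤ 1) :
    frobNorm (∑ k ∈ Finset.range M,
        (selMatrix M p n k)ᵀ * Matrix.vecMulVec v v * selMatrix M p n k) ^ 2
      ≤ (2 * p + 1) / M ∧
    specNorm (∑ k ∈ Finset.range M,
        (selMatrix M p n k)ᵀ * Matrix.vecMulVec v v * selMatrix M p n k)
      ≤ (p + 1) / M :=
  stmt16_general M p v hv
end
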